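/- arXiv:2603.22659 — 2 statements merged into one kernel-verified Lean document; each statement's English description precedes it below -/
import Mathlib

section
/- (Example 4.3, Rician fading: limits of k_β and existence of a valid β.) Let 0 < σ̲ ≤ σ̄, σ > 0, v ≥ 0, σ̲_X > 0. For β > 0 set A_β := βσ̲_X²/(2σ̄²(1+β)) and k_β := (2σ̄²/β)·( ln(2σ²A_β + 1) + A_β v²/(2σ²A_β + 1) ) + (σ̲²/β)·ln(1+β). Then k_β → 2σ²σ̲_X² + v²σ̲_X² + σ̲² as β → 0⁺ and k_β → 0 as β → ∞. Moreover, if 2σ²σ̲_X² + v²σ̲_X² + σ̲² > σ̄², then there exists β > 0 such that k_β > σ̄² and 1/2 − (1/2)·ln(σ̄²/k_β) − k_β/(2σ̄²) < 0. -/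
open Real Filter Set Topology

/-!
Write `k_β = g(β)/β` with `g(β) = 2σ̄² φ(A_β) + σ̲² log(1+β)` and
`φ(u) = log(2σ²u+1) + uv²/(2σ²u+1)`. Since `g(0) = 0`, the limit of `k_β` at `0⁺` is
`g'(0) = 2σ̄²(2σ² + v²)A'(0) + σ̲²`, where `A'(0) = σ̲_X²/(2σ̄²)`. At infinity `A_β` converges,
so `φ(A_β)` stays bounded, and `log(1+β)/β → 0`. Once `k_β > σ̄²` for some small `β`, the last
inequality is `log t < t - 1` for `t = k_β/σ̄² > 1`.
-/

noncomputable def ricianBracket (c w u : ℝ) : ℝ := log (c * u + 1) + u * w / (c * u + 1)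

theorem hasDerivAt_ricianBracket_zero (c w : ℝ) : HasDerivAt (ricianBracket c w) (c + w) 0 := by
  have hden : HasDerivAt (fun u => c * u + 1) c 0 := by
    simpa using ((hasDerivAt_id' 0).const_mul c).add_const 1
  unfold ricianBracket
  simpa using (hden.log (by simp)).fun_add (((hasDerivAt_id' 0).mul_const w).fun_div hden (by simp))

theorem continuousAt_ricianBracket (c w : ℝ) {u : ℝ} (hu : c * u + 1 ≠ 0) :
    ContinuousAt (ricianBracket c w) u := by
  unfold ricianBracket
  fun_prop (disch := exact hu)

theorem hasDerivAt_div_one_add_zero : HasDerivAt (fun x : ℝ => x / (1 + x)) 1 0 := by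
  simpa using (hasDerivAt_id' (0 : ℝ)).fun_div ((hasDerivAt_id' 0).const_add 1) (by simp)

theorem tendsto_div_one_add_atTop : Tendsto (fun x : ℝ => x / (1 + x)) atTop (𝓝 1) := by
  have hinv : Tendsto (fun x : ℝ => (1 + x)⁻¹) atTop (𝓝 0) :=
    tendsto_inv_atTop_zero.comp (tendsto_atTop_add_const_left _ 1 tendsto_id)
  have hsub : Tendsto (fun x : ℝ => 1 - (1 + x)⁻¹) atTop (𝓝 1) := by
    simpa using hinv.const_sub 1
  refine hsub.congr' ?_
  filter_upwards [eventually_gt_atTop 0] with x hx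
  have : 1 + x ≠ 0 := by positivity
  field_simp
  ring

theorem tendsto_log_one_add_div_atTop : Tendsto (fun x : ℝ => log (1 + x) / x) atTop (𝓝 0) := by
  have h := (tendsto_pow_log_div_mul_add_atTop 1 (-1) 1 one_ne_zero).comp
    (tendsto_atTop_add_const_left _ 1 tendsto_id)
  exact h.congr fun x => by simp

/-- The numerator `g(β) = β k_β`, with `s = 2σ̄²`, `c = 2σ²`, `w = v²`, `p = σ̲²` and
`A_β = a β/(1+β)` for `a = σ̲_X²/(2σ̄²)`. -/
noncomputable def ricianNumerator (s c w a p β : ℝ) : ℝ :=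
  s * ricianBracket c w (a * (β / (1 + β))) + p * log (1 + β)

theorem ricianNumerator_zero (s c w a p : ℝ) : ricianNumerator s c w a p 0 = 0 := by
  simp [ricianNumerator, ricianBracket]

theorem hasDerivAt_ricianNumerator_zero (s c w a p : ℝ) :
    HasDerivAt (ricianNumerator s c w a p) (s * ((c + w) * a) + p) 0 := by
  have hbracket := (hasDerivAt_ricianBracket_zero c w).comp_of_eq 0
    (hasDerivAt_div_one_add_zero.const_mul a) (by simp)
  have hlog : HasDerivAt (fun β : ℝ => log (1 + β)) 1 0 := by
    simpa using ((hasDerivAt_id' (0 : ℝ)).const_add 1).log (by simp)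
  exact ((hbracket.const_mul s).fun_add (hlog.const_mul p)).congr_deriv (by simp)

theorem tendsto_ricianNumerator_div_atTop (s w p : ℝ) {c a : ℝ} (hca : 0 ≤ c * a) :
    Tendsto (fun β => ricianNumerator s c w a p β / β) atTop (𝓝 0) := by
  have hbracket : Tendsto (fun β => ricianBracket c w (a * (β / (1 + β)))) atTop
      (𝓝 (ricianBracket c w a)) := by
    refine (continuousAt_ricianBracket c w (by positivity)).tendsto.comp ?_
    simpa using tendsto_div_one_add_atTop.const_mul a
  have := ((hbracket.const_mul s).div_atTop tendsto_id).add
    (tendsto_log_one_add_div_atTop.const_mul p)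
  simpa [ricianNumerator, add_div, mul_div_assoc] using this

theorem half_sub_half_log_div_sub_div_neg {s k : ℝ} (hs : 0 < s) (hsk : s < k) :
    1 / 2 - 1 / 2 * log (s / k) - k / (2 * s) < 0 := by
  have hlog : log (k / s) < k / s - 1 :=
    log_lt_sub_one_of_pos (div_pos (hs.trans hsk) hs) ((one_lt_div hs).mpr hsk).ne'
  rw [← inv_div k s, log_inv]
  have : k / (2 * s) = k / s / 2 := by ring
  linarith

theorem rician_fading_kbeta_general
    (σlow σup σ v σX : ℝ) (hσlow : 0 < σlow) (hσle : σlow ≤ σup)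
    (A : ℝ → ℝ) (hA : ∀ β, A β = β * σX ^ 2 / (2 * σup ^ 2 * (1 + β)))
    (k : ℝ → ℝ)
    (hk : ∀ β, k β = (2 * σup ^ 2 / β)
        * (Real.log (2 * σ ^ 2 * A β + 1) + A β * v ^ 2 / (2 * σ ^ 2 * A β + 1))
      + (σlow ^ 2 / β) * Real.log (1 + β)) :
    Tendsto k (nhdsWithin 0 (Ioi 0))
      (nhds (2 * σ ^ 2 * σX ^ 2 + v ^ 2 * σX ^ 2 + σlow ^ 2)) ∧
    Tendsto k atTop (nhds 0) ∧
    (σup ^ 2 < 2 * σ ^ 2 * σX ^ 2 + v ^ 2 * σX ^ 2 + σlow ^ 2 →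
      ∃ β : ℝ, 0 < β ∧ σup ^ 2 < k β ∧
        1 / 2 - (1 / 2) * Real.log (σup ^ 2 / k β) - k β / (2 * σup ^ 2) < 0) := by
  have hσup : 0 < σup := hσlow.trans_le hσle
  set g := ricianNumerator (2 * σup ^ 2) (2 * σ ^ 2) (v ^ 2) (σX ^ 2 / (2 * σup ^ 2)) (σlow ^ 2)
  have hkg : k = fun β => g β / β := funext fun β => by
    have hAβ : A β = σX ^ 2 / (2 * σup ^ 2) * (β / (1 + β)) := by
      rw [hA, div_mul_div_comm, mul_comm β]
    rw [hk, hAβ]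
    simp only [g, ricianNumerator, ricianBracket]
    ring
  have hlim0 : Tendsto k (𝓝[>] 0) (𝓝 (2 * σ ^ 2 * σX ^ 2 + v ^ 2 * σX ^ 2 + σlow ^ 2)) := by
    have hg' : HasDerivAt g (2 * σ ^ 2 * σX ^ 2 + v ^ 2 * σX ^ 2 + σlow ^ 2) 0 :=
      (hasDerivAt_ricianNumerator_zero _ _ _ _ _).congr_deriv (by field_simp)
    simpa [hkg, g, ricianNumerator_zero, div_eq_inv_mul] using hg'.tendsto_slope_zero_right
  have hlimTop : Tendsto k atTop (𝓝 0) := by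
    rw [hkg]
    exact tendsto_ricianNumerator_div_atTop _ _ _ (by positivity)
  refine ⟨hlim0, hlimTop, fun hlt => ?_⟩
  obtain ⟨β, hβk, hβ⟩ :=
    ((hlim0.eventually (eventually_gt_nhds hlt)).and self_mem_nhdsWithin).exists
  exact ⟨β, hβ, hβk, half_sub_half_log_div_sub_div_neg (by positivity) hβk⟩

/-- Example 4.3 (Rician fading): with `A_β = βσ̲_X²/(2σ̄²(1+β))` and
`k_β = (2σ̄²/β)·(ln(2σ²A_β+1) + A_βv²/(2σ²A_β+1)) + (σ̲²/β)·ln(1+β)`,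
one has `k_β → 2σ²σ̲_X² + v²σ̲_X² + σ̲²` as `β → 0⁺`, `k_β → 0` as `β → ∞`, and if
`2σ²σ̲_X² + v²σ̲_X² + σ̲² > σ̄²` then some `β > 0` satisfies `k_β > σ̄²` and
`1/2 − (1/2)·ln(σ̄²/k_β) − k_β/(2σ̄²) < 0`. -/
theorem rician_fading_kbeta
    (σlow σup σ v σX : ℝ) (hσlow : 0 < σlow) (hσle : σlow ≤ σup)
    (hσ : 0 < σ) (hv : 0 ≤ v) (hσX : 0 < σX)
    (A : ℝ → ℝ) (hA : ∀ β, A β = β * σX ^ 2 / (2 * σup ^ 2 * (1 + β)))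
    (k : ℝ → ℝ)
    (hk : ∀ β, k β = (2 * σup ^ 2 / β)
        * (Real.log (2 * σ ^ 2 * A β + 1) + A β * v ^ 2 / (2 * σ ^ 2 * A β + 1))
      + (σlow ^ 2 / β) * Real.log (1 + β)) :
    Tendsto k (nhdsWithin 0 (Ioi 0))
      (nhds (2 * σ ^ 2 * σX ^ 2 + v ^ 2 * σX ^ 2 + σlow ^ 2)) ∧
    Tendsto k atTop (nhds 0) ∧
    (σup ^ 2 < 2 * σ ^ 2 * σX ^ 2 + v ^ 2 * σX ^ 2 + σlow ^ 2 →
      ∃ β : ℝ, 0 < β ∧ σup ^ 2 < k β ∧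
        1 / 2 - (1 / 2) * Real.log (σup ^ 2 / k β) - k β / (2 * σup ^ 2) < 0) :=
  rician_fading_kbeta_general σlow σup σ v σX hσlow hσle A hA k hk
end

section
/- (Single-observation estimate in the proof of Theorem 4.1, classical instantiation.) Let (Ω, F, P) be a probability space carrying jointly independent real random variables X, ε, Z such that Z ~ N(0,σ²) with 0 < σ̲ ≤ σ ≤ σ̄, ε ≥ 0 almost surely, and |X| ≥ σ̲_X almost surely for a constant σ̲_X > 0. Then for every β > 0, E[ exp(−β(εX + Z)²/(2σ̄²)) ] ≤ (1+β)^{−ρ} · E[ exp(−βε²σ̲_X²/(2σ̄²(1+β))) ], where ρ := σ̲²/(2σ̄²). -/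
open MeasureTheory ProbabilityTheory Real
open scoped NNReal

/-!
With `c = β / (2σ̄²)`, integrating out `Z ~ N(0, σ²)` for fixed `a = εX` is an explicit Gaussian
integral (complete the square):
`E exp(-c (a + Z)²) = (1 + 2cσ²)^(-1/2) · exp(-c a² / (1 + 2cσ²))`.
Here `2cσ² = sβ` with `σ̲²/σ̄² ≤ s ≤ 1`, so Bernoulli's inequality `(1 + β)^t ≤ 1 + tβ` for
`t = σ̲²/σ̄² ≤ 1` bounds the prefactor by `(1 + β)^(-ρ)`, while `1 + sβ ≤ 1 + β` and `|X| ≥ σ̲_X`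
bound the exponent.
-/

lemma integral_exp_neg_mul_add_sq_sub_sq_div {c s : ℝ} (hc : 0 ≤ c) (hs : 0 < s) (a : ℝ) :
    ∫ z : ℝ, rexp (-(c * (a + z) ^ 2) - z ^ 2 / (2 * s))
      = √(π / (c + 1 / (2 * s))) * rexp (-(c * a ^ 2) / (1 + 2 * c * s)) := by
  set k := c + 1 / (2 * s)
  have hk : 0 < k := by positivity
  have complete_square : ∀ z : ℝ, -(c * (a + z) ^ 2) - z ^ 2 / (2 * s)
      = -(c * a ^ 2) / (1 + 2 * c * s) + -k * (z + c * a / k) ^ 2 := by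
    intro z
    simp only [k]
    field_simp
    ring
  simp_rw [complete_square, exp_add, integral_const_mul,
    integral_add_right_eq_self (fun z ↦ rexp (-k * z ^ 2)), integral_gaussian, mul_comm]

lemma integral_exp_neg_mul_add_sq_gaussianReal {c : ℝ} (hc : 0 ≤ c) (v : ℝ≥0) (a : ℝ) :
    ∫ z, rexp (-(c * (a + z) ^ 2)) ∂gaussianReal 0 v
      = (1 + 2 * c * v) ^ (-(1 / 2) : ℝ) * rexp (-(c * a ^ 2) / (1 + 2 * c * v)) := by
  rcases eq_or_ne v 0 with rfl | hv
  · simp [gaussianReal_zero_var]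
  have hv0 : (0 : ℝ) < v := by positivity
  have pdf_mul : ∀ z : ℝ, gaussianPDFReal 0 v z • rexp (-(c * (a + z) ^ 2))
      = (√(2 * π * v))⁻¹ * rexp (-(c * (a + z) ^ 2) - z ^ 2 / (2 * v)) := by
    intro z
    rw [smul_eq_mul, gaussianPDFReal, mul_assoc, ← exp_add]
    ring_nf
  have hK : (0 : ℝ) < 1 + 2 * c * v := by positivity
  have normalization :
      (√(2 * π * v))⁻¹ * √(π / (c + 1 / (2 * v))) = (1 + 2 * c * v) ^ (-(1 / 2) : ℝ) := by
    rw [← sqrt_inv, ← sqrt_mul (by positivity), rpow_neg hK.le, ← sqrt_eq_rpow, ← sqrt_inv]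
    congr 1
    field_simp
    ring
  simp_rw [integral_gaussianReal_eq_integral_smul hv, pdf_mul, integral_const_mul,
    integral_exp_neg_mul_add_sq_sub_sq_div hc hv0, ← mul_assoc, normalization]

theorem ProbabilityTheory.IndepFun.integral_comp_prodMk_eq_integral_integral {Ω α β E : Type*}
    [MeasurableSpace Ω] [MeasurableSpace α] [MeasurableSpace β]
    [NormedAddCommGroup E] [NormedSpace ℝ E]
    {P : Measure Ω} [IsFiniteMeasure P] {W : Ω → α} {Z : Ω → β}
    (hWZ : IndepFun W Z P) (hW : AEMeasurable W P) (hZ : AEMeasurable Z P)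
    {f : α × β → E} (hf : Integrable f ((P.map W).prod (P.map Z))) :
    ∫ ω, f (W ω, Z ω) ∂P = ∫ ω, ∫ z, f (W ω, z) ∂(P.map Z) ∂P := by
  have hmap := (indepFun_iff_map_prod_eq_prod_map_map hW hZ).mp hWZ
  rw [← integral_map (hW.prodMk hZ) (hmap ▸ hf.aestronglyMeasurable), hmap,
    integral_prod f hf, integral_map hW hf.integral_prod_left.aestronglyMeasurable]

lemma integrable_exp_of_nonpos {α : Type*} [MeasurableSpace α] {μ : Measure α}
    [IsFiniteMeasure μ] {g : α → ℝ} (hg : AEStronglyMeasurable g μ) (hg0 : ∀ x, g x ≤ 0) :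
    Integrable (fun x ↦ rexp (g x)) μ :=
  .of_bound (continuous_exp.comp_aestronglyMeasurable hg) 1 <| .of_forall fun x ↦ by
    simpa [abs_of_pos (exp_pos _)] using hg0 x

lemma one_add_mul_rpow_neg_half_le {β s t : ℝ} (hβ : 0 ≤ β) (ht0 : 0 ≤ t) (ht1 : t ≤ 1)
    (hts : t ≤ s) : (1 + s * β) ^ (-(1 / 2) : ℝ) ≤ (1 + β) ^ (-(t / 2)) := by
  have bernoulli : (1 + β) ^ t ≤ 1 + t * β :=
    rpow_one_add_le_one_add_mul_self (by linarith) ht0 ht1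
  calc (1 + s * β) ^ (-(1 / 2) : ℝ)
      ≤ ((1 + β) ^ t) ^ (-(1 / 2) : ℝ) :=
        rpow_le_rpow_of_nonpos (by positivity) (by nlinarith) (by norm_num)
    _ = (1 + β) ^ (-(t / 2)) := by rw [← rpow_mul (by linarith)]; ring_nf

theorem ProbabilityTheory.IndepFun.integral_exp_neg_mul_add_sq_of_map_eq_gaussianReal
    {Ω : Type*} [MeasurableSpace Ω] {P : Measure Ω} [IsFiniteMeasure P] {Y Z : Ω → ℝ}
    (hYZ : IndepFun Y Z P) (hY : AEMeasurable Y P) (hZ : AEMeasurable Z P) {v : ℝ≥0}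
    (hZv : P.map Z = gaussianReal 0 v) {c : ℝ} (hc : 0 ≤ c) :
    ∫ ω, rexp (-(c * (Y ω + Z ω) ^ 2)) ∂P
      = (1 + 2 * c * v) ^ (-(1 / 2) : ℝ) * ∫ ω, rexp (-(c * Y ω ^ 2) / (1 + 2 * c * v)) ∂P := by
  rw [hYZ.integral_comp_prodMk_eq_integral_integral hY hZ
    (f := fun p ↦ rexp (-(c * (p.1 + p.2) ^ 2)))
    (integrable_exp_of_nonpos (by fun_prop) fun p ↦ neg_nonpos.2 (by positivity))]
  simp_rw [hZv, integral_exp_neg_mul_add_sq_gaussianReal hc, integral_const_mul]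

theorem single_observation_estimate_general
    {Ω : Type*} [MeasurableSpace Ω] (P : Measure Ω) [IsProbabilityMeasure P]
    (X ε Z : Ω → ℝ)
    (hXmeas : Measurable X) (hεmeas : Measurable ε) (hZmeas : Measurable Z)
    (hindep : iIndepFun ![X, ε, Z] P)
    (σlow σ σup : ℝ) (h1 : 0 < σlow) (h2 : σlow ≤ σ) (h3 : σ ≤ σup)
    (hZ : Measure.map Z P = gaussianReal 0 ⟨σ ^ 2, sq_nonneg σ⟩)
    (σX : ℝ) (hσX : 0 < σX) (hX : ∀ᵐ ω ∂P, σX ≤ |X ω|)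
    (β : ℝ) (hβ : 0 < β) :
    ∫ ω, Real.exp (-(β * (ε ω * X ω + Z ω) ^ 2) / (2 * σup ^ 2)) ∂P
      ≤ (1 + β) ^ (-(σlow ^ 2 / (2 * σup ^ 2)))
        * ∫ ω, Real.exp (-(β * (ε ω) ^ 2 * σX ^ 2) / (2 * σup ^ 2 * (1 + β))) ∂P := by
  have hσup : 0 < σup := by linarith
  have hσ2 : σlow ^ 2 ≤ σ ^ 2 := pow_le_pow_left₀ h1.le h2 2
  have hσ2' : σ ^ 2 ≤ σup ^ 2 := pow_le_pow_left₀ (by linarith) h3 2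
  set c := β / (2 * σup ^ 2)
  set s := σ ^ 2 / σup ^ 2
  have hs1 : s ≤ 1 := div_le_one_of_le₀ hσ2' (by positivity)
  have hts : σlow ^ 2 / σup ^ 2 ≤ s := div_le_div_of_nonneg_right hσ2 (by positivity)
  have hεXZ : IndepFun (fun ω ↦ ε ω * X ω) Z P :=
    (hindep.indepFun_prodMk (fun i ↦ by fin_cases i <;> assumption) 1 0 2 (by decide)
      (by decide)).comp (measurable_fst.mul measurable_snd) measurable_id
  have exponent_le : ∀ᵐ ω ∂P,
      -(c * (ε ω * X ω) ^ 2) / (1 + s * β) ≤ -(c * (ε ω * σX) ^ 2) / (1 + β) := by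
    filter_upwards [hX] with ω hXω
    have : σX ^ 2 ≤ X ω ^ 2 := by simpa using pow_le_pow_left₀ hσX.le hXω 2
    rw [neg_div, neg_div, neg_le_neg_iff, mul_pow, mul_pow]
    gcongr
    exact mul_le_of_le_one_left hβ.le hs1
  calc _ = ∫ ω, rexp (-(c * (ε ω * X ω + Z ω) ^ 2)) ∂P := by
        congr with ω; congr 1; simp only [c]; ring
    _ = (1 + s * β) ^ (-(1 / 2) : ℝ)
          * ∫ ω, rexp (-(c * (ε ω * X ω) ^ 2) / (1 + s * β)) ∂P := by
        obtain ⟨v, hv, hZv⟩ : ∃ v : ℝ≥0, (v : ℝ) = σ ^ 2 ∧ P.map Z = gaussianReal 0 v :=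
          ⟨_, rfl, hZ⟩
        have h2cv : 2 * c * v = s * β := by simp only [c, s, hv]; field_simp
        rw [hεXZ.integral_exp_neg_mul_add_sq_of_map_eq_gaussianReal (by fun_prop) (by fun_prop)
          hZv (by positivity), h2cv]
    _ ≤ (1 + β) ^ (-(σlow ^ 2 / σup ^ 2 / 2))
          * ∫ ω, rexp (-(c * (ε ω * σX) ^ 2) / (1 + β)) ∂P := by
        gcongr ?_ * ?_
        · exact one_add_mul_rpow_neg_half_le hβ.le (by positivity) (hts.trans hs1) hts
        · refine integral_mono_ae ?_ ?_ (exponent_le.mono fun ω ↦ exp_le_exp.2) <;>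
            exact integrable_exp_of_nonpos (by fun_prop) fun ω ↦
              div_nonpos_of_nonpos_of_nonneg (neg_nonpos.2 (by positivity)) (by positivity)
    _ = _ := by
        congr 2
        · ring
        · congr with ω; congr 1; simp only [c]; field_simp

/-- Single-observation estimate in the proof of Theorem 4.1 (classical instantiation):
for jointly independent `X, ε, Z` with `Z ~ N(0,σ²)`, `0 < σ̲ ≤ σ ≤ σ̄`, `ε ≥ 0` a.s.
and `|X| ≥ σ̲_X > 0` a.s., for every `β > 0`,
`E[exp(−β(εX+Z)²/(2σ̄²))] ≤ (1+β)^{−ρ}·E[exp(−βε²σ̲_X²/(2σ̄²(1+β)))]`,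
where `ρ = σ̲²/(2σ̄²)`. -/
theorem single_observation_estimate
    {Ω : Type*} [MeasurableSpace Ω] (P : Measure Ω) [IsProbabilityMeasure P]
    (X ε Z : Ω → ℝ)
    (hXmeas : Measurable X) (hεmeas : Measurable ε) (hZmeas : Measurable Z)
    (hindep : iIndepFun ![X, ε, Z] P)
    (σlow σ σup : ℝ) (h1 : 0 < σlow) (h2 : σlow ≤ σ) (h3 : σ ≤ σup)
    (hZ : Measure.map Z P = gaussianReal 0 ⟨σ ^ 2, sq_nonneg σ⟩)
    (hεpos : ∀ᵐ ω ∂P, 0 ≤ ε ω)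
    (σX : ℝ) (hσX : 0 < σX) (hX : ∀ᵐ ω ∂P, σX ≤ |X ω|)
    (β : ℝ) (hβ : 0 < β) :
    ∫ ω, Real.exp (-(β * (ε ω * X ω + Z ω) ^ 2) / (2 * σup ^ 2)) ∂P
      ≤ (1 + β) ^ (-(σlow ^ 2 / (2 * σup ^ 2)))
        * ∫ ω, Real.exp (-(β * (ε ω) ^ 2 * σX ^ 2) / (2 * σup ^ 2 * (1 + β))) ∂P :=
  single_observation_estimate_general P X ε Z hXmeas hεmeas hZmeas hindep σlow σ σup h1 h2 h3 hZ σX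
    hσX hX β hβ
end
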